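/- Let F be a field, n k : ℕ with k ≤ n, and let S = {i : Fin n | (i : ℕ) < k} (as a Finset) with complement Sᶜ. Let θ be the F-algebra homomorphism from the polynomial ring F[u_1, …, u_k, v_1, …, v_{n−k}, w_1, …, w_n] to MvPolynomial (Fin n) F sending u_l ↦ e_l(S), v_j ↦ e_j(Sᶜ), and w_s ↦ e_s(univ) (the s-th elementary symmetric polynomial in all n variables). Then the kernel of θ is the ideal generated by the n elements Σ_{l+j=s, 0 ≤ l ≤ k, 0 ≤ j ≤ n−k} u_l · v_j − w_s for 1 ≤ s ≤ n, where one sets u_0 = v_0 = 1. -/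

import Mathlib

/-- The elementary symmetric polynomial `e_l(S) = Σ_{T ⊆ S, #T = l} ∏_{i ∈ T} X_i`
in the variables of a Finset `S`. -/
noncomputable def esymmOn {σ : Type*} (R : Type*) [CommRing R]
    (S : Finset σ) (l : ℕ) : MvPolynomial σ R :=
  ∑ T ∈ S.powersetCard l, ∏ i ∈ T, MvPolynomial.X i

/-- Auxiliary family: `padVar F emb 0 = 1` and `padVar F emb l = X (emb (l-1))`
for `1 ≤ l ≤ k`; this encodes the convention `u_0 = 1` for variables
`u_1, …, u_k` embedded via `emb`. -/
noncomputable def padVar {σ : Type*} (F : Type*) [CommRing F] {k : ℕ}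
    (emb : Fin k → σ) (l : Fin (k + 1)) : MvPolynomial σ F :=
  if h : (l : ℕ) = 0 then 1
  else MvPolynomial.X (emb ⟨(l : ℕ) - 1, by have := l.isLt; omega⟩)

/-! The `u`'s and `v`'s go to the elementary symmetric polynomials of the two blocks of
variables `S` and `Sᶜ`; these are algebraically independent, and by the convolution identity
`e_s(S ∪ Sᶜ) = Σ_{l+j=s} e_l(S) e_j(Sᶜ)` each `w_s` goes to the image of the polynomial
`q_s = Σ_{l+j=s} u_l v_j`. Whenever some generators of a presentation are algebraically
independent and the others are polynomials `q_s` in them, the relations `q_s - w_s` generate the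
kernel: substituting `q_s` for `w_s` changes a polynomial only modulo these relations and lands in
the polynomial ring on the independent generators, on which the map is injective. -/

open Finset MvPolynomial

section Kernel

variable {R A ι κ σ : Type*} [CommRing R] [CommRing A] [Algebra R A]

theorem sub_rename_aeval_mem_span (e : ι ⊕ κ ≃ σ) (q : κ → MvPolynomial ι R)
    (p : MvPolynomial σ R) :
    p - rename (e ∘ Sum.inl) (aeval (fun s => Sum.elim X q (e.symm s)) p) ∈
      Ideal.span (Set.range fun j => rename (e ∘ Sum.inl) (q j) - X (e (Sum.inr j))) := by
  set π : MvPolynomial σ R →ₐ[R] MvPolynomial ι R := aeval fun s => Sum.elim X q (e.symm s)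
  set ρ : MvPolynomial ι R →ₐ[R] MvPolynomial σ R := rename (e ∘ Sum.inl)
  set I := Ideal.span (Set.range fun j => ρ (q j) - X (e (Sum.inr j)))
  induction p using MvPolynomial.induction_on with
  | C a => simp
  | add p p' hp hp' => simpa only [map_add, add_sub_add_comm] using I.add_mem hp hp'
  | mul_X p s hp =>
    have hX : X s - ρ (π (X s)) ∈ I := by
      obtain ⟨i | j, rfl⟩ := e.surjective s
      · simp [π, ρ]
      · simpa [π] using I.neg_mem (Ideal.subset_span ⟨j, rfl⟩)
    have : p * X s - ρ (π (p * X s)) =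
        (p - ρ (π p)) * X s + ρ (π p) * (X s - ρ (π (X s))) := by
      simp only [map_mul]; ring
    rw [this]
    exact I.add_mem (I.mul_mem_right _ hp) (I.mul_mem_left _ hX)

theorem ker_aeval_eq_span_of_algebraicIndependent (e : ι ⊕ κ ≃ σ) (x : σ → A)
    (hx : AlgebraicIndependent R (x ∘ e ∘ Sum.inl)) (q : κ → MvPolynomial ι R)
    (hq : ∀ j, aeval (x ∘ e ∘ Sum.inl) (q j) = x (e (Sum.inr j))) :
    RingHom.ker (aeval x) =
      Ideal.span (Set.range fun j => rename (e ∘ Sum.inl) (q j) - X (e (Sum.inr j))) := by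
  refine le_antisymm (fun p hp => ?_) (Ideal.span_le.2 ?_)
  · have hfactor : (aeval (x ∘ e ∘ Sum.inl)).comp (aeval fun s => Sum.elim X q (e.symm s)) =
        aeval x := by
      refine algHom_ext fun s => ?_
      obtain ⟨i | j, rfl⟩ := e.surjective s
      · simp
      · simp [hq]
    have hp' : aeval (fun s => Sum.elim X q (e.symm s)) p = 0 :=
      (injective_iff_map_eq_zero _).1 hx _ <| by rw [← AlgHom.comp_apply, hfactor]; exact hp
    simpa only [hp', map_zero, sub_zero] using sub_rename_aeval_mem_span e q p
  · rintro _ ⟨j, rfl⟩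
    simp [aeval_rename, hq]

end Kernel

section Esymm

variable {R σ : Type*} [CommRing R]

theorem esymmOn_zero (S : Finset σ) : esymmOn R S 0 = 1 := by
  simp [esymmOn]

theorem esymmOn_eq_zero_of_card_lt {S : Finset σ} {l : ℕ} (h : #S < l) : esymmOn R S l = 0 := by
  simp [esymmOn, powersetCard_eq_empty.2 h]

theorem coeff_prod_one_add_C_X_mul_X (S : Finset σ) (l : ℕ) :
    (∏ i ∈ S, (1 + Polynomial.C (X i : MvPolynomial σ R) * Polynomial.X)).coeff l =
      esymmOn R S l := by
  classical
  simp only [prod_one_add, prod_mul_distrib, prod_const, ← map_prod, Polynomial.finsetSum_coeff,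
    Polynomial.coeff_C_mul_X_pow, esymmOn, powersetCard_eq_filter, sum_filter, eq_comm]

theorem esymmOn_union [DecidableEq σ] {A B : Finset σ} (h : Disjoint A B) (m : ℕ) :
    esymmOn R (A ∪ B) m = ∑ p ∈ antidiagonal m, esymmOn R A p.1 * esymmOn R B p.2 := by
  simp only [← coeff_prod_one_add_C_X_mul_X, prod_union h, Polynomial.coeff_mul]

theorem rename_esymm_eq_esymmOn {τ : Type*} [Fintype σ] (f : σ ↪ τ) (l : ℕ) :
    rename f (esymm σ R l) = esymmOn R (univ.map f) l := by
  simp [esymm, esymmOn, powersetCard_map, map_sum, map_prod]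

end Esymm

theorem sum_fin_sum_fin_ite_eq_sum_antidiagonal {M : Type*} [CommSemiring M] {a b : ℕ}
    {f g : ℕ → M} (hf : ∀ l, a < l → f l = 0) (hg : ∀ j, b < j → g j = 0) (m : ℕ) :
    ∑ l : Fin (a + 1), ∑ j : Fin (b + 1), (if (l : ℕ) + j = m then f l * g j else 0) =
      ∑ p ∈ antidiagonal m, f p.1 * g p.2 := by
  rw [Fin.sum_univ_eq_sum_range
    (fun l => ∑ j : Fin (b + 1), if l + (j : ℕ) = m then f l * g j else 0)]
  simp_rw [fun l => Fin.sum_univ_eq_sum_range (fun j => if l + j = m then f l * g j else 0)]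
  rw [← sum_product', ← sum_filter]
  refine sum_subset (fun p hp => by simp_all) fun p hp hp' => ?_
  simp only [mem_filter, mem_product, mem_range, HasAntidiagonal.mem_antidiagonal,
    Nat.lt_succ_iff] at hp hp'
  rcases Nat.lt_or_ge a p.1 with ha | ha
  · rw [hf _ ha, zero_mul]
  · rw [hg _ (by omega), mul_zero]

section Independence

variable (R : Type*) [CommRing R]

theorem algebraicIndependent_esymm (m : ℕ) :
    AlgebraicIndependent R fun i : Fin m => esymm (Fin m) R (i + 1) := by
  have : ⇑(aeval fun i : Fin m => esymm (Fin m) R (i + 1)) =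
      Subtype.val ∘ esymmAlgHom (Fin m) R m := funext fun p => (esymmAlgHom_apply p).symm
  rw [AlgebraicIndependent, this]
  exact Subtype.val_injective.comp (esymmAlgHom_fin_injective R le_rfl)

theorem algebraicIndependent_esymm_sumElim (k m : ℕ) :
    AlgebraicIndependent R (Sum.elim
      (fun a : Fin k => rename Sum.inl (esymm (Fin k) R (a + 1)))
      (fun b : Fin m => rename (R := R) Sum.inr (esymm (Fin m) R (b + 1)))) := by
  -- In `MvPolynomial (Fin k) (MvPolynomial (Fin m) R)`, the coefficient `esymm`s are independent
  -- over `R` and the outer ones over the coefficient ring.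
  convert ((algebraicIndependent_esymm R m).sumElim_comp
    (algebraicIndependent_esymm (MvPolynomial (Fin m) R) k)).map'
    (f := (sumAlgEquiv R (Fin k) (Fin m)).symm.toAlgHom) (AlgEquiv.injective _) using 1
  ext (a | b) : 1
  · refine ((sumAlgEquiv R _ _).symm_apply_eq.2 ?_).symm
    exact ((AlgHom.congr_fun (sumAlgEquiv_comp_rename_inl R _ _) _).trans
      (map_esymm (Fin k) R _ (algebraMap R (MvPolynomial (Fin m) R)))).symm
  · refine ((sumAlgEquiv R _ _).symm_apply_eq.2 ?_).symm
    exact (AlgHom.congr_fun (sumAlgEquiv_comp_rename_inr R _ _) _).symm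

end Independence

theorem algebraicIndependent_esymmOn_sumElim_compl (R : Type*) [CommRing R] {n k : ℕ}
    (hk : k ≤ n) :
    AlgebraicIndependent R (Sum.elim
      (fun a : Fin k => esymmOn R ({i : Fin n | (i : ℕ) < k} : Finset (Fin n)) (a + 1))
      (fun b : Fin (n - k) =>
        esymmOn R ({i : Fin n | (i : ℕ) < k} : Finset (Fin n))ᶜ (b + 1))) := by
  set e : Fin k ⊕ Fin (n - k) ≃ Fin n := finSumFinEquiv.trans (finCongr (by omega))
  have hS : univ.map (Function.Embedding.inl.trans e.toEmbedding) =
      ({i : Fin n | (i : ℕ) < k} : Finset (Fin n)) := by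
    ext i
    simp only [e, Equiv.trans_toEmbedding, Function.Embedding.trans_apply, mem_map, mem_univ,
      true_and, Function.Embedding.inl_apply, Equiv.coe_toEmbedding,
      finSumFinEquiv_apply_left, finCongr_apply, mem_filter]
    exact ⟨by rintro ⟨a, rfl⟩; simp, fun hi => ⟨⟨i, hi⟩, Fin.ext rfl⟩⟩
  have hSc : univ.map (Function.Embedding.inr.trans e.toEmbedding) =
      ({i : Fin n | (i : ℕ) < k} : Finset (Fin n))ᶜ := by
    ext i
    simp only [e, Equiv.trans_toEmbedding, Function.Embedding.trans_apply, mem_map, mem_univ,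
      true_and, Function.Embedding.inr_apply, Equiv.coe_toEmbedding,
      finSumFinEquiv_apply_right, finCongr_apply, compl_filter, not_lt, mem_filter]
    exact ⟨by rintro ⟨b, rfl⟩; simp,
      fun hi => ⟨⟨i - k, by omega⟩, Fin.ext (by simp; omega)⟩⟩
  convert (algebraicIndependent_esymm_sumElim R k (n - k)).map'
    (f := rename (R := R) e) (rename_injective _ e.injective) using 1
  ext (a | b) : 1
  · simp only [Sum.elim_inl, Function.comp_apply, rename_rename, ← hS]
    exact (rename_esymm_eq_esymmOn _ _).symm
  · simp only [Sum.elim_inr, Function.comp_apply, rename_rename, ← hSc]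
    exact (rename_esymm_eq_esymmOn _ _).symm

section PadVar

variable (F : Type*) [CommRing F] {σ : Type*} {k : ℕ}

theorem rename_padVar {τ : Type*} (f : σ → τ) (emb : Fin k → σ) (l : Fin (k + 1)) :
    rename f (padVar F emb l) = padVar F (f ∘ emb) l := by
  unfold padVar
  split_ifs <;> simp

theorem aeval_padVar {A : Type*} [CommRing A] [Algebra F A] {x : σ → A} {emb : Fin k → σ}
    {c : ℕ → A} (hc₀ : c 0 = 1) (hc : ∀ i, x (emb i) = c (i + 1)) (l : Fin (k + 1)) :
    aeval x (padVar F emb l) = c l := by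
  unfold padVar
  split_ifs with hl
  · simp [hl, hc₀]
  · rw [aeval_X, hc, Nat.sub_add_cancel (Nat.pos_of_ne_zero hl)]

end PadVar

theorem aeval_sum_padVar_mul_padVar {R σ : Type*} [CommRing R] [Fintype σ] [DecidableEq σ]
    {S : Finset σ} {k m : ℕ} (hS : #S ≤ k) (hSc : #Sᶜ ≤ m) (s : ℕ) :
    aeval (Sum.elim (fun a : Fin k => esymmOn R S (a + 1)) fun b : Fin m => esymmOn R Sᶜ (b + 1))
        (∑ l : Fin (k + 1), ∑ j : Fin (m + 1),
          if (l : ℕ) + (j : ℕ) = s then padVar R Sum.inl l * padVar R Sum.inr j else 0) =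
      esymmOn R univ s := by
  set y := Sum.elim (fun a : Fin k => esymmOn R S (a + 1)) fun b : Fin m => esymmOn R Sᶜ (b + 1)
  have hu : ∀ l, aeval y (padVar R Sum.inl l) = esymmOn R S l :=
    aeval_padVar R (esymmOn_zero S) fun _ => rfl
  have hv : ∀ j, aeval y (padVar R Sum.inr j) = esymmOn R Sᶜ j :=
    aeval_padVar R (esymmOn_zero Sᶜ) fun _ => rfl
  simp only [map_sum, apply_ite, map_mul, map_zero, hu, hv]
  rw [sum_fin_sum_fin_ite_eq_sum_antidiagonal
      (fun l hl => esymmOn_eq_zero_of_card_lt (hS.trans_lt hl))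
      (fun j hj => esymmOn_eq_zero_of_card_lt (hSc.trans_lt hj)),
    ← esymmOn_union disjoint_compl_right, union_compl]

/-- The kernel of the presentation
`F[u_1,…,u_k, v_1,…,v_{n-k}, w_1,…,w_n] → F[x_1,…,x_n]`,
`u_l ↦ e_l(S)`, `v_j ↦ e_j(Sᶜ)`, `w_s ↦ e_s(univ)` (for `S = {i | i < k}`),
is generated by the `n` elements `Σ_{l+j=s} u_l v_j − w_s`, `1 ≤ s ≤ n`,
with the convention `u_0 = v_0 = 1`. -/
theorem kernel_esymmOn_presentation {F : Type*} [Field F] {n k : ℕ} (hk : k ≤ n) :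
    RingHom.ker (MvPolynomial.aeval
        (fun i : Fin k ⊕ (Fin (n - k) ⊕ Fin n) =>
          Sum.elim
            (fun l : Fin k =>
              esymmOn F ({i : Fin n | (i : ℕ) < k} : Finset (Fin n)) ((l : ℕ) + 1))
            (Sum.elim
              (fun j : Fin (n - k) =>
                esymmOn F (({i : Fin n | (i : ℕ) < k} : Finset (Fin n))ᶜ) ((j : ℕ) + 1))
              (fun s : Fin n =>
                esymmOn F (Finset.univ : Finset (Fin n)) ((s : ℕ) + 1)))
            i) :
        MvPolynomial (Fin k ⊕ (Fin (n - k) ⊕ Fin n)) F →ₐ[F] MvPolynomial (Fin n) F)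
      = Ideal.span {g : MvPolynomial (Fin k ⊕ (Fin (n - k) ⊕ Fin n)) F |
          ∃ s : Fin n,
            g = (∑ l : Fin (k + 1), ∑ j : Fin (n - k + 1),
                  if (l : ℕ) + (j : ℕ) = (s : ℕ) + 1 then
                    padVar F Sum.inl l * padVar F (Sum.inr ∘ Sum.inl) j
                  else 0)
                - MvPolynomial.X (Sum.inr (Sum.inr s))} := by
  set S : Finset (Fin n) := {i : Fin n | (i : ℕ) < k}
  set x : Fin k ⊕ (Fin (n - k) ⊕ Fin n) → MvPolynomial (Fin n) F := fun i =>
    Sum.elim (fun l : Fin k => esymmOn F S ((l : ℕ) + 1))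
      (Sum.elim (fun j : Fin (n - k) => esymmOn F Sᶜ ((j : ℕ) + 1))
        (fun s : Fin n => esymmOn F univ ((s : ℕ) + 1))) i
  have hx_inl : x ∘ Equiv.sumAssoc _ _ _ ∘ Sum.inl =
      Sum.elim (fun a : Fin k => esymmOn F S (a + 1))
        fun b : Fin (n - k) => esymmOn F Sᶜ (b + 1) := by
    ext (a | b) <;> rfl
  have hx : AlgebraicIndependent F (x ∘ Equiv.sumAssoc _ _ _ ∘ Sum.inl) := by
    rw [hx_inl]; exact algebraicIndependent_esymmOn_sumElim_compl F hk
  have hcard : #S ≤ k := by rw [Fin.card_filter_val_lt]; omega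
  have hcard_compl : #Sᶜ ≤ n - k := by
    rw [card_compl, Fintype.card_fin, Fin.card_filter_val_lt]; omega
  have hq : ∀ s : Fin n, aeval (x ∘ Equiv.sumAssoc _ _ _ ∘ Sum.inl)
      (∑ l : Fin (k + 1), ∑ j : Fin (n - k + 1), if (l : ℕ) + (j : ℕ) = (s : ℕ) + 1 then
        padVar F Sum.inl l * padVar F Sum.inr j else 0) = x (Equiv.sumAssoc _ _ _ (Sum.inr s)) :=
    fun s => by rw [hx_inl, aeval_sum_padVar_mul_padVar hcard hcard_compl]; rfl
  rw [ker_aeval_eq_span_of_algebraicIndependent (Equiv.sumAssoc _ _ _) x hx _ hq]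
  congr 1
  ext g
  simp only [Set.mem_range, Set.mem_ofPred_eq, map_sum, apply_ite, map_mul, map_zero,
    rename_padVar, eq_comm]
  -- `Equiv.sumAssoc ∘ Sum.inl ∘ Sum.inr` is `Sum.inr ∘ Sum.inl` by definition.
  rfl
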